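/- arXiv:1312.7294 — 5 statements merged into one kernel-verified Lean document; each statement's English description precedes it below -/
import Mathlib

section
/- Let K be the fundamental group of the Klein bottle, presented as the group with generators x, y and the single relation x²y² = 1. Then there exists an integer n ≥ 2 such that K is not SL_n(ℂ)-free. -/
/-- A subset `S` of `SL_n(ℂ)` is Zariski-dense if every polynomial in the `n²` matrix
entries vanishing on `S` vanishes on all of `SL_n(ℂ)`. -/
def ZariskiDenseInSL (n : ℕ) (S : Set (Matrix.SpecialLinearGroup (Fin n) ℂ)) : Prop :=
  ∀ P : MvPolynomial (Fin n × Fin n) ℂ,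
    (∀ A ∈ S, MvPolynomial.eval (fun p => (A : Matrix (Fin n) (Fin n) ℂ) p.1 p.2) P = 0) →
    ∀ A : Matrix.SpecialLinearGroup (Fin n) ℂ,
      MvPolynomial.eval (fun p => (A : Matrix (Fin n) (Fin n) ℂ) p.1 p.2) P = 0

/-- A group `Γ` is `SL_n(ℂ)`-free if for every `γ ≠ 1` the set of values `φ γ` over all
homomorphisms `φ : Γ →* SL_n(ℂ)` is Zariski-dense in `SL_n(ℂ)`. -/
def IsSLFree (n : ℕ) (Γ : Type*) [Group Γ] : Prop :=
  ∀ γ : Γ, γ ≠ 1 →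
    ZariskiDenseInSL n {A | ∃ φ : Γ →* Matrix.SpecialLinearGroup (Fin n) ℂ, φ γ = A}

/-- The Klein bottle relator `x²y²` on generators `x = 0`, `y = 1`. -/
def kleinBottleRelator : FreeGroup (Fin 2) :=
  (FreeGroup.of 0) ^ 2 * (FreeGroup.of 1) ^ 2

/-!
If `g γ g⁻¹ = γ⁻¹`, every image `A = φ γ` in `SLₙ(ℂ)` is conjugate to its inverse, so it satisfies
the polynomial equation `tr A = tr (adj A)` (on `SLₙ` the adjugate is the inverse). For `n ≥ 3`
this equation fails at `diag(2, 2, 1/4, 1, …, 1)`, so the images of `γ` are not Zariski-dense.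
In the Klein bottle group, `γ = xy` is nontrivial (it survives in `ℤ/2` under `x ↦ 1, y ↦ 0`)
and the relation `x²y² = 1` gives `x γ x⁻¹ = x²y x⁻¹ = y⁻¹x⁻¹ = γ⁻¹`.
-/

namespace Matrix

variable {n R : Type*} [Fintype n] [DecidableEq n] [CommRing R]

theorem eval_trace_sub_trace_adjugate_mvPolynomialX (A : Matrix n n R) :
    MvPolynomial.eval (fun p : n × n => A p.1 p.2)
        ((mvPolynomialX n n R).trace - (mvPolynomialX n n R).adjugate.trace) =
      A.trace - A.adjugate.trace := by
  rw [map_sub, AddMonoidHom.map_trace, AddMonoidHom.map_trace, ← RingHom.mapMatrix_apply,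
    ← RingHom.mapMatrix_apply, RingHom.map_adjugate, mvPolynomialX_mapMatrix_eval]

namespace SpecialLinearGroup

theorem trace_conj (A B : SpecialLinearGroup n R) :
    (↑(B * A * B⁻¹) : Matrix n n R).trace = (A : Matrix n n R).trace := by
  rw [coe_mul, coe_mul, coe_inv, trace_mul_comm, ← Matrix.mul_assoc, adjugate_mul, det_coe,
    one_smul, Matrix.one_mul]

theorem trace_inv_eq_of_conj_eq_inv {A B : SpecialLinearGroup n R} (h : B * A * B⁻¹ = A⁻¹) :
    (↑A⁻¹ : Matrix n n R).trace = (A : Matrix n n R).trace := by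
  rw [← h, trace_conj]

theorem exists_trace_inv_ne_trace {m : ℕ} (hm : 3 ≤ m) :
    ∃ A : SpecialLinearGroup (Fin m) ℂ,
      (↑A⁻¹ : Matrix (Fin m) (Fin m) ℂ).trace ≠ (A : Matrix (Fin m) (Fin m) ℂ).trace := by
  obtain ⟨k, rfl⟩ := Nat.exists_eq_add_of_le' hm
  set d : Fin (k + 3) → ℂ := vecCons 2 (vecCons 2 (vecCons 4⁻¹ fun _ => 1)) with hd
  set e : Fin (k + 3) → ℂ := vecCons 2⁻¹ (vecCons 2⁻¹ (vecCons 4 fun _ => 1)) with he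
  have hdet : (diagonal d).det = 1 := by
    norm_num [det_diagonal, hd, Fin.prod_univ_succ]
  have hed : (fun i => e i * d i) = fun _ => 1 := by
    ext i; refine Fin.cases ?_ (Fin.cases ?_ (Fin.cases ?_ ?_)) i <;> simp [hd, he]
  let A : SpecialLinearGroup (Fin (k + 3)) ℂ := ⟨diagonal d, hdet⟩
  have hinv : (↑A⁻¹ : Matrix (Fin (k + 3)) (Fin (k + 3)) ℂ) = diagonal e :=
    calc (↑A⁻¹ : Matrix (Fin (k + 3)) (Fin (k + 3)) ℂ)
        = diagonal e * diagonal d * ↑A⁻¹ := by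
          rw [diagonal_mul_diagonal, hed, diagonal_one, Matrix.one_mul]
      _ = diagonal e * ↑(A * A⁻¹) := by rw [coe_mul, Matrix.mul_assoc]
      _ = diagonal e := by rw [mul_inv_cancel, coe_one, Matrix.mul_one]
  refine ⟨A, ?_⟩
  rw [hinv]
  simp only [A, trace_diagonal, hd, he, Fin.sum_univ_succ, cons_val_zero, cons_val_succ,
    Finset.sum_const, Finset.card_univ, Fintype.card_fin, nsmul_eq_mul, mul_one]
  rw [ne_eq, ← sub_eq_zero]
  ring_nf
  norm_num

end SpecialLinearGroup

end Matrix

theorem not_zariskiDenseInSL_of_trace_inv_eq {n : ℕ}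
    {S : Set (Matrix.SpecialLinearGroup (Fin n) ℂ)}
    (hS : ∀ A ∈ S, (↑A⁻¹ : Matrix (Fin n) (Fin n) ℂ).trace = (A : Matrix (Fin n) (Fin n) ℂ).trace)
    {A₀ : Matrix.SpecialLinearGroup (Fin n) ℂ}
    (hA₀ : (↑A₀⁻¹ : Matrix (Fin n) (Fin n) ℂ).trace ≠ (A₀ : Matrix (Fin n) (Fin n) ℂ).trace) :
    ¬ ZariskiDenseInSL n S := by
  intro hdense
  have hvanish := hdense
    ((Matrix.mvPolynomialX _ _ ℂ).trace - (Matrix.mvPolynomialX _ _ ℂ).adjugate.trace)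
    (fun A hA => by
      rw [Matrix.eval_trace_sub_trace_adjugate_mvPolynomialX,
        ← Matrix.SpecialLinearGroup.coe_inv, hS A hA, sub_self]) A₀
  rw [Matrix.eval_trace_sub_trace_adjugate_mvPolynomialX, ← Matrix.SpecialLinearGroup.coe_inv,
    sub_eq_zero] at hvanish
  exact hA₀ hvanish.symm

theorem not_isSLFree_of_conj_eq_inv {Γ : Type*} [Group Γ] {n : ℕ} (hn : 3 ≤ n) {g γ : Γ}
    (hγ : γ ≠ 1) (hg : g * γ * g⁻¹ = γ⁻¹) : ¬ IsSLFree n Γ := by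
  intro hfree
  obtain ⟨A₀, hA₀⟩ := Matrix.SpecialLinearGroup.exists_trace_inv_ne_trace hn
  refine not_zariskiDenseInSL_of_trace_inv_eq ?_ hA₀ (hfree γ hγ)
  rintro _ ⟨φ, rfl⟩
  refine Matrix.SpecialLinearGroup.trace_inv_eq_of_conj_eq_inv (B := φ g) ?_
  rw [← map_mul, ← map_inv, ← map_mul, hg, map_inv]

abbrev KleinBottleGroup : Type := PresentedGroup ({kleinBottleRelator} : Set (FreeGroup (Fin 2)))

namespace KleinBottleGroup

def x : KleinBottleGroup := PresentedGroup.of 0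

def y : KleinBottleGroup := PresentedGroup.of 1

theorem x_sq_mul_y_sq : x ^ 2 * y ^ 2 = 1 :=
  PresentedGroup.one_of_mem (Set.mem_singleton kleinBottleRelator)

theorem x_mul_xy_mul_x_inv : x * (x * y) * x⁻¹ = (x * y)⁻¹ := by
  rw [mul_inv_rev, eq_mul_inv_iff_mul_eq, mul_assoc, mul_assoc, inv_mul_cancel, mul_one,
    ← mul_assoc, ← sq, eq_inv_iff_mul_eq_one, mul_assoc, ← sq, x_sq_mul_y_sq]

theorem x_mul_y_ne_one : x * y ≠ 1 := by
  let f : Fin 2 → Multiplicative (ZMod 2) := ![Multiplicative.ofAdd 1, 1]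
  have hf : ∀ r ∈ ({kleinBottleRelator} : Set (FreeGroup (Fin 2))), FreeGroup.lift f r = 1 := by
    rintro _ rfl
    simp only [kleinBottleRelator, map_mul, map_pow, FreeGroup.lift_apply_of, f,
      Matrix.cons_val_zero, Matrix.cons_val_one, one_pow, mul_one]
    decide
  intro h
  have := congrArg (PresentedGroup.toGroup hf) h
  simp [x, y, PresentedGroup.toGroup.of, f] at this

end KleinBottleGroup

/-- The fundamental group `⟨x, y ∣ x²y² = 1⟩` of the Klein bottle fails to be
`SL_n(ℂ)`-free for some `n ≥ 2`. -/
theorem kleinBottle_not_isSLFree :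
    ∃ n : ℕ, 2 ≤ n ∧
      ¬ IsSLFree n (PresentedGroup ({kleinBottleRelator} : Set (FreeGroup (Fin 2)))) :=
  ⟨3, by norm_num, not_isSLFree_of_conj_eq_inv le_rfl KleinBottleGroup.x_mul_y_ne_one
    KleinBottleGroup.x_mul_xy_mul_x_inv⟩
end

section
/- Let n ≥ 2 and let Γ be a finitely generated group which is SL_n(ℂ)-free. Then Γ is linear: there exists a natural number m and an injective group homomorphism from Γ into GL_m(ℂ). -/
open Matrix Cardinal

universe u

theorem Algebra.FiniteType.cardinalMk_le_continuum (A : Type*) [CommRing A] [Algebra ℂ A]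
    [Algebra.FiniteType ℂ A] : #A ≤ 𝔠 := by
  obtain ⟨k, f, hf⟩ := Algebra.FiniteType.iff_quotient_mvPolynomial''.1 ‹_›
  have hpoly : #(MvPolynomial (Fin k) ℂ) ≤ 𝔠 :=
    MvPolynomial.cardinalMk_le_max.trans <|
      max_le (max_le mk_complex.le ((lt_aleph0_of_finite _).le.trans aleph0_le_continuum))
        aleph0_le_continuum
  simpa using (lift_mk_le_lift_mk_of_surjective hf).trans (lift_le.2 hpoly)

theorem exists_injective_ringHom_complex (D : Type*) [CommRing D] [IsDomain D] [Algebra ℂ D]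
    (hD : #D ≤ 𝔠) : ∃ σ : D →+* ℂ, Function.Injective σ := by
  let F := FractionRing D
  let K := AlgebraicClosure F
  have : CharZero K := charZero_of_injective_algebraMap (algebraMap ℂ K).injective
  have hK : #K = 𝔠 := by
    refine le_antisymm ?_ ?_
    · refine (Algebra.IsAlgebraic.cardinalMk_le_max F K).trans (max_le ?_ aleph0_le_continuum)
      exact (Localization.cardinalMk_le _).trans hD
    · simpa using lift_mk_le_lift_mk_of_injective (algebraMap ℂ K).injective
  obtain ⟨ε⟩ := IsAlgClosed.ringEquiv_of_equiv_of_charZero (K := K) (L := ℂ)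
    (hK ▸ aleph0_lt_continuum) (lift_mk_eq'.1 (by simp [hK]))
  exact ⟨ε.toRingHom.comp (algebraMap D K),
    ε.injective.comp ((algebraMap F K).injective.comp (IsFractionRing.injective D F))⟩

theorem exists_injective_ringHom_pi_complex (A : Type u) [CommRing A] [Algebra ℂ A]
    [Algebra.FiniteType ℂ A] [IsReduced A] :
    ∃ (T : Type u) (_ : Fintype T) (e : A →+* (T → ℂ)), Function.Injective e := by
  have := Algebra.FiniteType.isNoetherianRing ℂ A
  have : Fintype (minimalPrimes A) := (minimalPrimes.finite_of_isNoetherianRing A).fintype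
  have hσ (p : minimalPrimes A) :
      ∃ σ : A ⧸ (p : Ideal A) →+* ℂ, Function.Injective σ := by
    have := p.2.1.1
    exact exists_injective_ringHom_complex _ <|
      (mk_le_of_surjective Ideal.Quotient.mk_surjective).trans
        (Algebra.FiniteType.cardinalMk_le_continuum A)
  choose σ hσ using hσ
  refine ⟨minimalPrimes A, inferInstance,
    RingHom.pi fun p => (σ p).comp (Ideal.Quotient.mk _), ?_⟩
  rw [injective_iff_map_eq_zero]
  intro a ha
  have ha' : a ∈ sInf (minimalPrimes A) := Submodule.mem_sInf.2 fun p hp =>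
    Ideal.Quotient.eq_zero_iff_mem.1 <| hσ ⟨p, hp⟩ <| by simpa using congrFun ha ⟨p, hp⟩
  rw [Ideal.sInf_minimalPrimes] at ha'
  obtain ⟨m, hm⟩ := ha'
  exact IsReduced.eq_zero a ⟨m, Ideal.mem_bot.1 hm⟩

theorem Matrix.exists_injective_ringHom_of_injective_pi {ι A R T : Type*} [Fintype ι]
    [DecidableEq ι] [CommRing A] [CommRing R] [Fintype T] (e : A →+* (T → R))
    (he : Function.Injective e) :
    ∃ (m : ℕ) (F : Matrix ι ι A →+* Matrix (Fin m) (Fin m) R), Function.Injective F := by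
  classical
  refine ⟨_, (reindexRingEquiv R (Fintype.equivFin (ι × T))).toRingHom.comp <|
    (blockDiagonalRingHom ι T R).comp <| piRingEquiv.toRingHom.comp e.mapMatrix, ?_⟩
  exact (reindexRingEquiv R _).injective.comp <|
    blockDiagonal_injective.comp <| piRingEquiv.injective.comp (map_injective he)

namespace Matrix.SpecialLinearGroup

variable {ι : Type*} [Fintype ι] [DecidableEq ι]

def ofPi {X R : Type*} [CommRing R] :
    (X → SpecialLinearGroup ι R) →* SpecialLinearGroup ι (X → R) where
  toFun M := ⟨piRingEquiv.symm fun x => (M x : Matrix ι ι R), funext fun x =>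
    (RingHom.map_det (Pi.evalRingHom (fun _ => R) x)
      (piRingEquiv.symm fun x => (M x : Matrix ι ι R))).trans (M x).2⟩
  map_one' := Subtype.ext (map_one piRingEquiv.symm)
  map_mul' M N :=
    Subtype.ext (map_mul piRingEquiv.symm (fun x => (M x : Matrix ι ι R)) fun x => N x)

theorem ofPi_injective {X R : Type*} [CommRing R] :
    Function.Injective (ofPi : (X → SpecialLinearGroup ι R) →* _) := fun _ _ h =>
  funext fun x => Subtype.ext <| congrFun (piRingEquiv.symm.injective (congrArg Subtype.val h)) x

theorem mem_range_map_val_of_forall_mem {K R : Type*} [CommRing K] [CommRing R] [Algebra K R]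
    (A : Subalgebra K R) (M : SpecialLinearGroup ι R) (hM : ∀ i j, M i j ∈ A) :
    M ∈ (map A.val.toRingHom).range := by
  let N : Matrix ι ι A := of fun i j => ⟨M i j, hM i j⟩
  have hN : A.val.toRingHom.mapMatrix N = M := rfl
  have hdet : N.det = 1 :=
    Subtype.val_injective <| (RingHom.map_det A.val.toRingHom N).trans (hN ▸ M.2)
  exact ⟨⟨N, hdet⟩, Subtype.ext hN⟩

theorem exists_fg_subalgebra_lift (K : Type*) {R Γ : Type*} [CommRing K] [CommRing R]
    [Algebra K R] [Group Γ] [Group.FG Γ] (ρ : Γ →* SpecialLinearGroup ι R) :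
    ∃ A : Subalgebra K R, A.FG ∧
      ∃ ρ' : Γ →* SpecialLinearGroup ι A, (map A.val.toRingHom).comp ρ' = ρ := by
  obtain ⟨S, hS⟩ := Group.FG.out (G := Γ)
  set s : Set R := ⋃ g ∈ S, Set.range fun p : ι × ι => ρ g p.1 p.2
  have hs : s.Finite := S.finite_toSet.biUnion fun _ _ => Set.finite_range _
  set A := Algebra.adjoin K s
  have hinj : Function.Injective (map (n := ι) A.val.toRingHom) := fun M N h =>
    Subtype.ext (map_injective Subtype.val_injective (congrArg Subtype.val h))
  have hρA : ∀ γ, ρ γ ∈ (map A.val.toRingHom).range := by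
    suffices Subgroup.closure (S : Set Γ) ≤ (map A.val.toRingHom).range.comap ρ by
      rw [hS] at this
      exact fun γ => this (Subgroup.mem_top γ)
    refine (Subgroup.closure_le _).2 fun g hg => mem_range_map_val_of_forall_mem A _ fun i j =>
      Algebra.subset_adjoin (Set.mem_biUnion hg ⟨(i, j), rfl⟩)
  refine ⟨A, ⟨hs.toFinset, by simp [A]⟩,
    (MonoidHom.ofInjective hinj).symm.toMonoidHom.comp (ρ.codRestrict _ hρA), ?_⟩
  ext γ : 1
  exact congrArg Subtype.val ((MonoidHom.ofInjective hinj).apply_symm_apply ⟨ρ γ, hρA γ⟩)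

theorem exists_injective_GL_of_injective {Γ A : Type*} [Group Γ] [CommRing A] [Algebra ℂ A]
    [Algebra.FiniteType ℂ A] [IsReduced A] (ρ : Γ →* SpecialLinearGroup ι A)
    (hρ : Function.Injective ρ) :
    ∃ (m : ℕ) (φ : Γ →* GL (Fin m) ℂ), Function.Injective φ := by
  obtain ⟨T, _, e, he⟩ := exists_injective_ringHom_pi_complex A
  obtain ⟨m, F, hF⟩ := exists_injective_ringHom_of_injective_pi (ι := ι) e he
  exact ⟨m, (Units.map F.toMonoidHom).comp (toGL.comp ρ),
    (Units.map_injective hF).comp (toGL_injective.comp hρ)⟩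

end Matrix.SpecialLinearGroup

open Matrix.SpecialLinearGroup

def tautologicalRep (n : ℕ) (Γ : Type*) [Group Γ] :
    Γ →* SpecialLinearGroup (Fin n) ((Γ →* SpecialLinearGroup (Fin n) ℂ) → ℂ) :=
  ofPi.comp (MonoidHom.pi fun φ => φ)

theorem not_zariskiDenseInSL_singleton_one {n : ℕ} (hn : 2 ≤ n) :
    ¬ ZariskiDenseInSL n {1} := by
  let i : Fin n := ⟨0, by omega⟩
  let j : Fin n := ⟨1, by omega⟩
  have hij : i ≠ j := by simp [i, j, Fin.ext_iff]
  intro h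
  have := h (MvPolynomial.X (i, j)) (by simp [one_apply, hij]) (transvection hij 1)
  simp [transvection_coe, one_apply, hij] at this

theorem injective_tautologicalRep {n : ℕ} (hn : 2 ≤ n) {Γ : Type*} [Group Γ]
    (hfree : IsSLFree n Γ) : Function.Injective (tautologicalRep n Γ) := by
  rw [injective_iff_map_eq_one]
  intro γ hγ
  by_contra hne
  have hall (φ : Γ →* SpecialLinearGroup (Fin n) ℂ) : φ γ = 1 :=
    congrFun (ofPi_injective (hγ.trans (map_one ofPi).symm)) φ
  refine not_zariskiDenseInSL_singleton_one hn ?_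
  convert hfree γ hne
  ext A
  simp [hall, eq_comm]

/-- A finitely generated group which is `SL_n(ℂ)`-free (for some `n ≥ 2`) is linear:
it embeds into `GL_m(ℂ)` for some `m`. -/
theorem SLFree_implies_linear (n : ℕ) (hn : 2 ≤ n) (Γ : Type*) [Group Γ] [Group.FG Γ]
    (hfree : IsSLFree n Γ) :
    ∃ (m : ℕ) (φ : Γ →* Matrix.GeneralLinearGroup (Fin m) ℂ), Function.Injective φ := by
  obtain ⟨A, hA, ρ, hρ⟩ := exists_fg_subalgebra_lift ℂ (tautologicalRep n Γ)
  have : Algebra.FiniteType ℂ A := A.fg_iff_finiteType.1 hA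
  have : IsReduced A := isReduced_of_injective A.val Subtype.val_injective
  have htaut := injective_tautologicalRep hn hfree
  rw [← hρ, MonoidHom.coe_comp] at htaut
  exact exists_injective_GL_of_injective ρ htaut.of_comp
end

section
/- Let Γ be a finitely generated group which is linear over ℂ (there exist m and an injective group homomorphism Γ → GL_m(ℂ)), and suppose Γ has infinitely many elements of order exactly 2. Then Γ is not almost SL_2(ℂ)-free: there exists an element γ ∈ Γ of infinite order such that the set of values φ(γ) over all group homomorphisms φ : Γ → SL_2(ℂ) is not Zariski-dense in SL_2(ℂ). -/
instance Int.isJacobsonRing : IsJacobsonRing ℤ := by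
  refine isJacobsonRing_iff_prime_eq.2 fun P hP => ?_
  by_cases hbot : P = ⊥
  · subst hbot
    refine le_antisymm (fun x hx => ?_) Ideal.le_jacobson
    rw [Ideal.mem_jacobson_bot] at hx
    have h₁ := Int.isUnit_iff.1 (hx 1)
    have h₂ := Int.isUnit_iff.1 (hx (-1))
    rw [Ideal.mem_bot]
    omega
  · have : P.IsMaximal := IsPrime.to_maximal_ideal hbot
    exact Ideal.jacobson_eq_self_of_isMaximal

theorem Field.ringChar_ne_zero_of_finiteType_int (F : Type*) [Field F]
    [Algebra.FiniteType ℤ F] : ringChar F ≠ 0 := by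
  intro h
  have : CharZero F := (CharP.charP_zero_iff_charZero F).1 (h ▸ ringChar.charP F)
  have : Module.Finite ℤ F := finite_of_finite_type_of_isJacobsonRing ℤ F
  exact Int.not_isField <|
    (Algebra.IsIntegral.isField_iff_isField Int.cast_injective).2 (Field.toIsField F)

theorem Field.finite_of_finiteType_int (F : Type*) [Field F] [Algebra.FiniteType ℤ F] :
    Finite F := by
  set p := ringChar F
  have : CharP F p := ringChar.charP F
  have : NeZero p := ⟨Field.ringChar_ne_zero_of_finiteType_int F⟩
  let _ := ZMod.algebra F p
  have : Module.Finite ℤ F := finite_of_finite_type_of_isJacobsonRing ℤ F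
  have : Module.Finite (ZMod p) F := Module.Finite.of_restrictScalars_finite ℤ (ZMod p) F
  exact Module.finite_of_finite (ZMod p)

theorem exists_isMaximal_notMem_of_finiteType_int {A : Type*} [CommRing A]
    [Algebra.FiniteType ℤ A] {a : A} (ha : ¬IsNilpotent a) :
    ∃ M : Ideal A, M.IsMaximal ∧ a ∉ M := by
  have : IsJacobsonRing A := isJacobsonRing_of_finiteType (A := ℤ)
  have hmem : a ∉ (⊥ : Ideal A).jacobson := by
    rw [← Ideal.radical_eq_jacobson]
    exact mt mem_nilradical.2 ha
  simp only [Ideal.jacobson, Submodule.mem_sInf, not_forall] at hmem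
  obtain ⟨M, ⟨-, hM⟩, haM⟩ := hmem
  exact ⟨M, hM, haM⟩

theorem finite_quotient_of_finiteType_int {A : Type*} [CommRing A] [Algebra.FiniteType ℤ A]
    (M : Ideal A) [M.IsMaximal] : Finite (A ⧸ M) := by
  have : Algebra.FiniteType ℤ (A ⧸ M) :=
    .of_surjective (Ideal.Quotient.mkₐ ℤ M) (Ideal.Quotient.mkₐ_surjective ℤ M)
  -- `Ideal.Quotient.field` is not an instance, so it is passed explicitly.
  exact @Field.finite_of_finiteType_int _ (Ideal.Quotient.field M) this

namespace Matrix

variable {n R F : Type*} [Fintype n] [DecidableEq n] [CommRing R] [IsDomain R]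
  [CommRing F] [IsDomain F]

theorem eq_one_of_pow_eq_one_of_map_eq_one (f : R →+* F) {y : Matrix n n R} (hy : y.map f = 1)
    {k : ℕ} (hk : (k : F) ≠ 0) (hyk : y ^ k = 1) : y = 1 := by
  set S := ∑ i ∈ Finset.range k, y ^ i
  have hS : S * (y - 1) = 0 := by rw [geom_sum_mul, hyk, sub_self]
  have hSf : f.mapMatrix S = (k : Matrix n n F) := by
    simp [S, map_sum, map_pow, RingHom.mapMatrix_apply, hy]
  have hdet : S.det ≠ 0 := by
    intro h
    have := f.map_det S
    rw [h, map_zero, hSf, ← nsmul_one, ← Nat.cast_smul_eq_nsmul F, det_smul, det_one,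
      mul_one] at this
    exact pow_ne_zero _ hk this.symm
  have : S.det • (y - 1) = 0 := by
    rw [← smul_one_mul, ← adjugate_mul, mul_assoc, hS, mul_zero]
  exact sub_eq_zero.1 ((smul_eq_zero.1 this).resolve_left hdet)

theorem exists_pow_prime_pow_eq_one_of_map_eq_one (f : R →+* F) {p : ℕ} [CharP F p]
    (hp : p.Prime) {y : Matrix n n R} (hy : y.map f = 1) (hfin : IsOfFinOrder y) :
    ∃ e, y ^ p ^ e = 1 := by
  set k := orderOf y
  have hk : k ≠ 0 := hfin.orderOf_pos.ne'
  refine ⟨k.factorization p, eq_one_of_pow_eq_one_of_map_eq_one f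
    (k := k / p ^ k.factorization p) ?_
    ((CharP.cast_eq_zero_iff F p _).not.2 (Nat.not_dvd_ordCompl hp hk)) ?_⟩
  · rw [← RingHom.mapMatrix_apply, map_pow, RingHom.mapMatrix_apply, hy, one_pow]
  · rw [← pow_mul, Nat.mul_div_cancel' (Nat.ordProj_dvd k p), pow_orderOf_eq_one]

theorem eq_one_of_map_eq_one_of_isOfFinOrder {F' : Type*} [CommRing F'] [IsDomain F']
    (f : R →+* F) (f' : R →+* F') {p p' : ℕ} [CharP F p] [CharP F' p'] (hp : p.Prime)
    (hp' : p'.Prime) (hpp' : p ≠ p') {y : Matrix n n R} (hy : y.map f = 1) (hy' : y.map f' = 1)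
    (hfin : IsOfFinOrder y) : y = 1 := by
  obtain ⟨e, he⟩ := exists_pow_prime_pow_eq_one_of_map_eq_one f hp hy hfin
  obtain ⟨e', he'⟩ := exists_pow_prime_pow_eq_one_of_map_eq_one f' hp' hy' hfin
  have hcop : (p ^ e).Coprime (p' ^ e') := .pow e e' ((Nat.coprime_primes hp hp').2 hpp')
  exact orderOf_eq_one_iff.1 <|
    Nat.eq_one_of_dvd_coprimes hcop (orderOf_dvd_of_pow_eq_one he)
      (orderOf_dvd_of_pow_eq_one he')

end Matrix

theorem exists_involutions_mul_ne_one_map_eq_one {Γ M : Type*} [Group Γ] [Monoid M] [Finite M]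
    (ρ : Γ →* M) (hinv : {γ : Γ | orderOf γ = 2}.Infinite) :
    ∃ a b : Γ, orderOf a = 2 ∧ orderOf b = 2 ∧ a * b ≠ 1 ∧ ρ (a * b) = 1 := by
  obtain ⟨a, ha, b, hb, hab, hρ⟩ :=
    hinv.exists_ne_map_eq_of_mapsTo (Set.mapsTo_univ ρ _) Set.finite_univ
  have hb' : b⁻¹ = b := inv_eq_self_of_orderOf_eq_two hb
  refine ⟨a, b, ha, hb, fun h => hab (hb' ▸ eq_inv_of_mul_eq_one_left h), ?_⟩
  rw [map_mul, hρ, ← map_mul, ← sq, ← hb, pow_orderOf_eq_one, map_one]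

theorem exists_involutions_mul_not_isOfFinOrder {Γ A n : Type*} [Group Γ] [CommRing A]
    [IsDomain A] [CharZero A] [Algebra.FiniteType ℤ A] [Fintype n] [DecidableEq n]
    (Ψ : Γ →* GL n A) (hΨ : Function.Injective Ψ)
    (hinv : {γ : Γ | orderOf γ = 2}.Infinite) :
    ∃ a b : Γ, orderOf a = 2 ∧ orderOf b = 2 ∧ ¬IsOfFinOrder (a * b) := by
  obtain ⟨M, hM, -⟩ :=
    exists_isMaximal_notMem_of_finiteType_int (not_isNilpotent_one (R := A))
  have := finite_quotient_of_finiteType_int M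
  set p := ringChar (A ⧸ M)
  have hp : p.Prime := CharP.char_is_prime (A ⧸ M) p
  obtain ⟨M', hM', hpM'⟩ := exists_isMaximal_notMem_of_finiteType_int
    (a := (p : A)) (by rw [isNilpotent_iff_eq_zero]; exact_mod_cast hp.ne_zero)
  have := finite_quotient_of_finiteType_int M'
  set p' := ringChar (A ⧸ M')
  have hp' : p'.Prime := CharP.char_is_prime (A ⧸ M') p'
  have hpp' : p ≠ p' := by
    intro hpp'
    apply hpM'
    rw [← Ideal.Quotient.eq_zero_iff_mem, map_natCast, hpp', ringChar.Nat.cast_ringChar]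
  let reduce (I : Ideal A) : Γ →* Matrix n n (A ⧸ I) :=
    (Ideal.Quotient.mk I).mapMatrix.toMonoidHom.comp ((Units.coeHom _).comp Ψ)
  obtain ⟨a, b, ha, hb, hab, hred⟩ :=
    exists_involutions_mul_ne_one_map_eq_one ((reduce M).prod (reduce M')) hinv
  refine ⟨a, b, ha, hb, fun hfin => hab (hΨ (Units.ext ?_))⟩
  rw [map_one, Units.val_one]
  exact Matrix.eq_one_of_map_eq_one_of_isOfFinOrder (Ideal.Quotient.mk M)
    (Ideal.Quotient.mk M') hp hp' hpp' (congrArg Prod.fst hred) (congrArg Prod.snd hred)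
    (((Units.coeHom _).comp Ψ).isOfFinOrder hfin)

namespace Matrix.GeneralLinearGroup

variable {n S K : Type*} [Fintype n] [DecidableEq n] [CommRing S] [CommRing K] [Algebra S K]

theorem mem_range_map_val {R : Subalgebra S K} {g : GL n K}
    (hg : ∀ i j, (g : Matrix n n K) i j ∈ R)
    (hg' : ∀ i j, (↑g⁻¹ : Matrix n n K) i j ∈ R) :
    g ∈ (Units.map (R.val.mapMatrix (m := n) : Matrix n n R →* Matrix n n K)).range := by
  have hinj : Function.Injective (R.val.mapMatrix (m := n) : Matrix n n R →* Matrix n n K) :=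
    Matrix.map_injective Subtype.val_injective
  let u : GL n R :=
    { val := of fun i j => ⟨g i j, hg i j⟩
      inv := of fun i j => ⟨(↑g⁻¹ : Matrix n n K) i j, hg' i j⟩
      val_inv := hinj (by rw [map_mul, map_one]; exact g.mul_inv)
      inv_val := hinj (by rw [map_mul, map_one]; exact g.inv_mul) }
  exact ⟨u, Units.ext rfl⟩

theorem exists_fg_subalgebra_lift {Γ : Type*} [Group Γ] [Group.FG Γ] (ψ : Γ →* GL n K) :
    ∃ R : Subalgebra ℤ K, R.FG ∧ ∃ Ψ : Γ →* GL n R,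
      (Units.map (R.val.mapMatrix (m := n) : Matrix n n R →* Matrix n n K)).comp Ψ = ψ := by
  obtain ⟨G, hG, hGfin⟩ := Group.fg_iff.1 ‹_›
  set E : Set K := ⋃ s ∈ G, (Set.range fun ij : n × n => (ψ s : Matrix n n K) ij.1 ij.2) ∪
    Set.range fun ij : n × n => (↑(ψ s)⁻¹ : Matrix n n K) ij.1 ij.2
  have hEfin : E.Finite :=
    hGfin.biUnion fun _ _ => (Set.finite_range _).union (Set.finite_range _)
  refine ⟨Algebra.adjoin ℤ E, ?_, ?_⟩
  · rw [← hEfin.coe_toFinset]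
    exact Subalgebra.fg_adjoin_finset _
  set R := Algebra.adjoin ℤ E
  set ι := Units.map (R.val.mapMatrix (m := n) : Matrix n n R →* Matrix n n K)
  have hι : Function.Injective ι :=
    Units.map_injective (Matrix.map_injective Subtype.val_injective)
  have hrange : ψ.range ≤ ι.range := by
    rw [MonoidHom.range_eq_map, ← hG, MonoidHom.map_closure, Subgroup.closure_le]
    rintro _ ⟨s, hs, rfl⟩
    exact mem_range_map_val
      (fun i j => Algebra.subset_adjoin (Set.mem_biUnion hs (Or.inl ⟨(i, j), rfl⟩)))
      (fun i j => Algebra.subset_adjoin (Set.mem_biUnion hs (Or.inr ⟨(i, j), rfl⟩)))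
  refine ⟨(MonoidHom.ofInjective hι).symm.toMonoidHom.comp
    (ψ.codRestrict ι.range fun γ => hrange ⟨γ, rfl⟩), MonoidHom.ext fun γ => ?_⟩
  simp [ι, MonoidHom.apply_ofInjective_symm]

end Matrix.GeneralLinearGroup

theorem Matrix.SpecialLinearGroup.eq_one_or_eq_neg_one_of_mul_self_eq_one {K : Type*}
    [CommRing K] [IsDomain K] [NeZero (2 : K)] {A : SpecialLinearGroup (Fin 2) K}
    (hA : A * A = 1) : A = 1 ∨ A = -1 := by
  have hadj : (A : Matrix (Fin 2) (Fin 2) K) = adjugate A := by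
    rw [← coe_inv, inv_eq_of_mul_eq_one_right hA]
  rw [adjugate_fin_two] at hadj
  have eq_zero_of_eq_neg (x : K) (hx : x = -x) : x = 0 :=
    (mul_eq_zero.1 (by linear_combination hx : (2 : K) * x = 0)).resolve_left two_ne_zero
  have h01 : A 0 1 = 0 := eq_zero_of_eq_neg _ (by simpa using congrFun₂ hadj 0 1)
  have h10 : A 1 0 = 0 := eq_zero_of_eq_neg _ (by simpa using congrFun₂ hadj 1 0)
  have h11 : A 1 1 = A 0 0 := by simpa using congrFun₂ hadj 1 1
  have hdet : A 0 0 * A 0 0 = 1 := by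
    have := A.det_coe
    rw [det_fin_two, h01, h11] at this
    linear_combination this
  rcases mul_self_eq_one_iff.1 hdet with h | h
  · left
    ext i j
    fin_cases i <;> fin_cases j <;> simp [h01, h10, h11, h]
  · right
    ext i j
    fin_cases i <;> fin_cases j <;> simp [h01, h10, h11, h]

theorem not_zariskiDenseInSL_of_forall_apply_eq_zero {n : ℕ} {i j : Fin n} (hij : i ≠ j)
    {S : Set (Matrix.SpecialLinearGroup (Fin n) ℂ)} (hS : ∀ A ∈ S, A i j = 0) :
    ¬ZariskiDenseInSL n S := by
  intro hdense
  have := hdense (MvPolynomial.X (i, j)) (by simpa using hS)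
    ⟨Matrix.transvection i j 1, Matrix.det_transvection_of_ne i j hij 1⟩
  simp [Matrix.transvection, hij] at this

/-- A finitely generated linear group with infinitely many elements of order two is not
almost `SL_2(ℂ)`-free. -/
theorem linear_infinitely_many_involutions_not_almostSLFree
    (Γ : Type*) [Group Γ] [Group.FG Γ]
    (hlin : ∃ (m : ℕ) (φ : Γ →* Matrix.GeneralLinearGroup (Fin m) ℂ),
      Function.Injective φ)
    (hinv : {γ : Γ | orderOf γ = 2}.Infinite) :
    ∃ γ : Γ, ¬ IsOfFinOrder γ ∧
      ¬ ZariskiDenseInSL 2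
        {A | ∃ φ : Γ →* Matrix.SpecialLinearGroup (Fin 2) ℂ, φ γ = A} := by
  obtain ⟨m, ψ, hψ⟩ := hlin
  obtain ⟨R, hR, Ψ, hΨψ⟩ := Matrix.GeneralLinearGroup.exists_fg_subalgebra_lift ψ
  have : Algebra.FiniteType ℤ R := (Subalgebra.fg_iff_finiteType R).1 hR
  have hΨ : Function.Injective Ψ :=
    .of_comp (f := Units.map _) (by rwa [← MonoidHom.coe_comp, hΨψ])
  obtain ⟨a, b, ha, hb, hab⟩ := exists_involutions_mul_not_isOfFinOrder Ψ hΨ hinv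
  refine ⟨a * b, hab,
    not_zariskiDenseInSL_of_forall_apply_eq_zero (i := 0) (j := 1) (by decide) ?_⟩
  rintro _ ⟨φ, rfl⟩
  have hsq {c : Γ} (hc : orderOf c = 2) : φ c * φ c = 1 := by
    rw [← map_mul, mul_eq_one_iff_eq_inv.2 (inv_eq_self_of_orderOf_eq_two hc).symm, map_one]
  open Matrix.SpecialLinearGroup in
  rcases eq_one_or_eq_neg_one_of_mul_self_eq_one (hsq ha) with h | h <;>
    rcases eq_one_or_eq_neg_one_of_mul_self_eq_one (hsq hb) with h' | h' <;>
    simp [h, h']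
end

section
/- Let Γ be a group with a normal subgroup Δ which is abelian and torsion-free (every element of Δ other than the identity has infinite order). Let t ∈ Γ and a ∈ Δ be such that the set S = { t^k a t^{-k} : k ∈ ℤ } is finite of cardinality p with 1 < p. Then for every integer n > p, the group Γ is not SL_n(ℂ)-free. -/
/-!
Let `c = ⁅a, t⁆`. It lies in `Δ`, and it is nontrivial because `t` does not commute with `a` (the
orbit is not a point). As the orbit has `p` elements, `t ^ p` commutes with `a`, so
`(c * t) ^ p = t ^ p`: the product of the pairwise commuting conjugates `t ^ k * c * t ^ (-k)`,
`k < p`, is trivial. Given `φ : Γ →* SL_n(ℂ)`, a common eigenvector of the images of these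
conjugates yields eigenvalues `ν₀, …, ν_{p-1}` of `φ c` with product `1`, so the `p`-th Kronecker
power of `φ c` has eigenvalue `1`. Hence the polynomial `det (A^{⊗p} - 1)` vanishes at every `φ c`,
but not at `diag (e, …, e, e ^ (1 - n))`, since no `p < n` of its diagonal entries multiply to `1`.
-/

open Matrix MulAction ConjAct
open scoped commutatorElement

section Conjugation

variable {G : Type*} [Group G]

lemma MulAction.minimalPeriod_eq_ncard_orbit_zpowers {α : Type*} [MulAction G α] (g : G) (b : α)
    (h : (orbit (Subgroup.zpowers g) b).Finite) :
    Function.minimalPeriod (g • ·) b = (orbit (Subgroup.zpowers g) b).ncard := by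
  have := h.fintype
  rw [minimalPeriod_eq_card, Set.ncard_eq_toFinset_card', Set.toFinset_card]

lemma ConjAct.toConjAct_smul_eq_self_iff {g h : G} : toConjAct g • h = h ↔ Commute g h := by
  rw [toConjAct_smul, mul_inv_eq_iff_eq_mul]
  rfl

lemma setOf_zpow_conj_eq_orbit (t a : G) :
    {x : G | ∃ k : ℤ, x = t ^ k * a * t ^ (-k)} = orbit (Subgroup.zpowers (toConjAct t)) a := by
  ext x
  simp [mem_orbit_iff, ← map_zpow, toConjAct_smul, eq_comm]

lemma commute_pow_and_not_commute_of_ncard_conj_orbit {t a : G} {p : ℕ} (hp : 1 < p)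
    (hS : {x : G | ∃ k : ℤ, x = t ^ k * a * t ^ (-k)}.ncard = p) :
    Commute (t ^ p) a ∧ ¬ Commute t a := by
  rw [setOf_zpow_conj_eq_orbit] at hS
  have hper :=
    minimalPeriod_eq_ncard_orbit_zpowers _ a (Set.finite_of_ncard_pos (by rw [hS]; omega))
  rw [hS] at hper
  refine ⟨?_, fun h => ?_⟩
  · rw [← toConjAct_smul_eq_self_iff, map_pow, pow_smul_eq_iff_minimalPeriod_dvd, hper]
  · have := Function.minimalPeriod_eq_one_iff_isFixedPt.mpr (toConjAct_smul_eq_self_iff.mpr h)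
    rw [hper] at this
    omega

lemma commutatorElement_mul_pow_eq_pow {a t : G} {m : ℕ} (h : Commute (t ^ m) a) :
    (⁅a, t⁆ * t) ^ m = t ^ m := by
  rw [commutatorElement_def, inv_mul_cancel_right, conj_pow, ← h.eq, mul_inv_cancel_right]

lemma mul_pow_eq_prod_conj_mul_pow (c t : G) (m : ℕ) :
    (c * t) ^ m = (List.ofFn fun k : Fin m => t ^ (k : ℕ) * c * (t ^ (k : ℕ))⁻¹).prod * t ^ m := by
  induction m with
  | zero => simp
  | succ m ih =>
    rw [pow_succ, ih, List.ofFn_succ', List.prod_concat]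
    simp only [Fin.val_castSucc, Fin.val_last]
    group

end Conjugation

attribute [local instance] LieRing.ofAssociativeRing in
theorem Module.End.exists_common_eigenvector {K V κ : Type*} [Field K] [IsAlgClosed K]
    [AddCommGroup V] [Module K V] [FiniteDimensional K V] [Nontrivial V]
    (f : κ → Module.End K V) (h : ∀ i j, Commute (f i) (f j)) :
    ∃ v ≠ 0, ∀ i, ∃ μ : K, f i v = μ • v := by
  let L := LieSubalgebra.lieSpan K (Module.End K V) (Set.range f)
  have : IsLieAbelian L := by
    simp only [L, LieSubalgebra.isLieAbelian_lieSpan_iff, Set.mem_range, forall_exists_index,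
      forall_apply_eq_imp_iff]
    exact fun i j => (h i j).lie_eq
  obtain ⟨χ, hχ⟩ := LieModule.exists_nontrivial_weightSpace_of_isNilpotent K L V
  obtain ⟨⟨v, hv⟩, hv0⟩ := exists_ne (0 : LieModule.weightSpace V χ)
  refine ⟨v, by simpa using hv0, fun i => ⟨χ ⟨f i, LieSubalgebra.subset_lieSpan ⟨i, rfl⟩⟩, ?_⟩⟩
  rw [LieModule.mem_weightSpace] at hv
  exact hv ⟨f i, _⟩

namespace Matrix

variable {ι R : Type*} [CommRing R]

theorem exists_common_eigenvector {K κ : Type*} [Fintype ι] [DecidableEq ι] [Nonempty ι] [Field K]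
    [IsAlgClosed K] (M : κ → Matrix ι ι K) (h : ∀ i j, Commute (M i) (M j)) :
    ∃ v ≠ 0, ∀ i, ∃ μ : K, M i *ᵥ v = μ • v := by
  simpa only [toLin'_apply] using
    Module.End.exists_common_eigenvector (fun i => toLin' (M i))
      fun i j => (h i j).map toLinAlgEquiv'

def kroneckerPow (m : ℕ) (A : Matrix ι ι R) : Matrix (Fin m → ι) (Fin m → ι) R :=
  of fun f g => ∏ k, A (f k) (g k)

lemma kroneckerPow_map {S : Type*} [CommRing S] (φ : R →+* S) (m : ℕ) (A : Matrix ι ι R) :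
    (kroneckerPow m A).map φ = kroneckerPow m (A.map φ) := by
  ext f g
  simp [kroneckerPow]

lemma kroneckerPow_mulVec_prod [Fintype ι] (m : ℕ) (A : Matrix ι ι R) (w : Fin m → ι → R) :
    kroneckerPow m A *ᵥ (fun g => ∏ k, w k (g k)) = fun f => ∏ k, (A *ᵥ w k) (f k) := by
  funext f
  simp only [mulVec, dotProduct, kroneckerPow, of_apply, ← Finset.prod_mul_distrib]
  exact (Fintype.prod_sum fun k j => A (f k) j * w k j).symm

variable [DecidableEq ι]

lemma list_ofFn_prod_mulVec_of_mulVec_eq_smul [Fintype ι] {m : ℕ} (M : Fin m → Matrix ι ι R)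
    (μ : Fin m → R) (v : ι → R) (h : ∀ k, M k *ᵥ v = μ k • v) :
    (List.ofFn M).prod *ᵥ v = (∏ k, μ k) • v := by
  induction m with
  | zero => simp
  | succ m ih =>
    rw [List.ofFn_succ, List.prod_cons, ← mulVec_mulVec, ih _ _ fun k => h k.succ, mulVec_smul,
      h 0, smul_smul, Fin.prod_univ_succ, mul_comm]

lemma kroneckerPow_diagonal (m : ℕ) (d : ι → R) :
    kroneckerPow m (diagonal d) = diagonal fun f => ∏ k, d (f k) := by
  ext f g
  by_cases hfg : f = g
  · subst hfg
    simp [kroneckerPow]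
  · obtain ⟨k, hk⟩ := Function.ne_iff.mp hfg
    rw [diagonal_apply_ne _ hfg]
    exact Finset.prod_eq_zero (Finset.mem_univ k) (diagonal_apply_ne d hk)

lemma det_kroneckerPow_sub_one_eq_zero [Fintype ι] [IsDomain R] {m : ℕ} {A : Matrix ι ι R}
    {ν : Fin m → R} (hν : ∀ k, ∃ w ≠ 0, A *ᵥ w = ν k • w) (hprod : ∏ k, ν k = 1) :
    (kroneckerPow m A - 1).det = 0 := by
  choose w hw0 hw using hν
  choose f₀ hf₀ using fun k => Function.ne_iff.mp (hw0 k)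
  refine exists_mulVec_eq_zero_iff.mp ⟨fun g => ∏ k, w k (g k), Function.ne_iff.mpr ⟨f₀, ?_⟩, ?_⟩
  · exact Finset.prod_ne_zero_iff.mpr fun k _ => hf₀ k
  · rw [sub_mulVec, one_mulVec, kroneckerPow_mulVec_prod, sub_eq_zero]
    funext f
    simp [hw, Finset.prod_mul_distrib, hprod]

lemma eval_det_kroneckerPow_mvPolynomialX_sub_one [Fintype ι] (m : ℕ) (A : Matrix ι ι R) :
    MvPolynomial.eval (fun p : ι × ι => A p.1 p.2)
        (kroneckerPow m (mvPolynomialX ι ι R) - 1).det = (kroneckerPow m A - 1).det := by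
  rw [RingHom.map_det, map_sub, map_one, RingHom.mapMatrix_apply, kroneckerPow_map]
  congr
  exact mvPolynomialX_map_eval₂ (RingHom.id R) A

end Matrix

section Representation

variable {G ι K : Type*} [Group G] [Fintype ι] [DecidableEq ι]

lemma exists_mulVec_eq_smul_of_conj [CommRing K] (ρ : G →* Matrix ι ι K) {g c : G} {μ : K}
    {v : ι → K} (hv : v ≠ 0) (h : ρ (g * c * g⁻¹) *ᵥ v = μ • v) :
    ∃ w ≠ 0, ρ c *ᵥ w = μ • w := by
  refine ⟨ρ g⁻¹ *ᵥ v, fun h0 => hv ?_, ?_⟩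
  · rw [← one_mulVec v, ← map_one ρ, ← mul_inv_cancel g, map_mul, ← mulVec_mulVec, h0, mulVec_zero]
  · rw [mulVec_mulVec, ← map_mul, show c * g⁻¹ = g⁻¹ * (g * c * g⁻¹) by group, map_mul,
      ← mulVec_mulVec, h, mulVec_smul]

lemma exists_eigenvalues_prod_eq_one_of_mul_pow_eq_pow [Field K] [IsAlgClosed K] [Nonempty ι]
    (ρ : G →* Matrix ι ι K) {c t : G} {m : ℕ}
    (hcomm : ∀ i j : ℕ, Commute (t ^ i * c * (t ^ i)⁻¹) (t ^ j * c * (t ^ j)⁻¹))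
    (h : (c * t) ^ m = t ^ m) :
    ∃ ν : Fin m → K, (∀ k, ∃ w ≠ 0, ρ c *ᵥ w = ν k • w) ∧ ∏ k, ν k = 1 := by
  let d : Fin m → G := fun k => t ^ (k : ℕ) * c * (t ^ (k : ℕ))⁻¹
  obtain ⟨v, hv0, hv⟩ := exists_common_eigenvector (fun k => ρ (d k))
    fun i j => (hcomm i j).map ρ
  choose ν hν using hv
  refine ⟨ν, fun k => exists_mulVec_eq_smul_of_conj ρ hv0 (hν k), ?_⟩
  have hd : (List.ofFn d).prod = 1 := by
    rwa [mul_pow_eq_prod_conj_mul_pow, mul_eq_right] at h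
  have := list_ofFn_prod_mulVec_of_mulVec_eq_smul _ ν v hν
  rw [← Function.comp_def, ← List.map_ofFn, ← map_list_prod, hd, map_one, one_mulVec] at this
  exact smul_left_injective K hv0 (this.symm.trans (one_smul K v).symm)

end Representation

lemma ZariskiDenseInSL.det_kroneckerPow_sub_one_eq_zero {n m : ℕ}
    {S : Set (SpecialLinearGroup (Fin n) ℂ)} (hS : ZariskiDenseInSL n S)
    (h : ∀ A ∈ S, (kroneckerPow m (A : Matrix (Fin n) (Fin n) ℂ) - 1).det = 0)
    (A : SpecialLinearGroup (Fin n) ℂ) :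
    (kroneckerPow m (A : Matrix (Fin n) (Fin n) ℂ) - 1).det = 0 := by
  simpa only [eval_det_kroneckerPow_mvPolynomialX_sub_one] using
    hS (kroneckerPow m (mvPolynomialX _ _ ℂ) - 1).det
      (fun B hB => by simpa only [eval_det_kroneckerPow_mvPolynomialX_sub_one] using h B hB) A

lemma exists_det_kroneckerPow_sub_one_ne_zero {ι : Type*} [Fintype ι] [DecidableEq ι] {m : ℕ}
    (hm : 0 < m) (hmι : m < Fintype.card ι) :
    ∃ A : SpecialLinearGroup ι ℂ, (kroneckerPow m (A : Matrix ι ι ℂ) - 1).det ≠ 0 := by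
  obtain ⟨i₀⟩ : Nonempty ι := Fintype.card_pos_iff.mp (hm.trans hmι)
  let e : ι → ℝ := fun i => 1 - Fintype.card ι * if i = i₀ then 1 else 0
  have he_univ : ∑ i, e i = 0 := by simp [e, Finset.sum_sub_distrib]
  have he : ∀ f : Fin m → ι, ∑ k, e (f k) ≠ 0 := by
    intro f h
    simp only [e, Finset.sum_sub_distrib, ← Finset.mul_sum, Finset.sum_boole] at h
    norm_num [sub_eq_zero] at h
    norm_cast at h
    have := Nat.eq_zero_of_dvd_of_lt ⟨_, h⟩ hmι
    omega
  let d : ι → ℂ := fun i => (Real.exp (e i) : ℂ)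
  refine ⟨⟨diagonal d, by
    simp only [d, det_diagonal, ← Complex.ofReal_prod, ← Real.exp_sum, he_univ, Real.exp_zero,
      Complex.ofReal_one]⟩, ?_⟩
  rw [show ((⟨diagonal d, _⟩ : SpecialLinearGroup ι ℂ) : Matrix ι ι ℂ) = diagonal d from rfl,
    kroneckerPow_diagonal, ← diagonal_one, diagonal_sub, det_diagonal]
  refine Finset.prod_ne_zero_iff.mpr fun f _ => sub_ne_zero.mpr ?_
  simp only [d, ← Complex.ofReal_prod, ← Real.exp_sum]
  exact_mod_cast Real.exp_eq_one_iff _ |>.not.mpr (he f)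

theorem not_SLFree_of_finite_conjugation_orbit_general
    (Γ : Type*) [Group Γ] (Δ : Subgroup Γ) (hΔn : Δ.Normal)
    (hab : ∀ x ∈ Δ, ∀ y ∈ Δ, x * y = y * x)
    (t : Γ) (a : Γ) (ha : a ∈ Δ) (p : ℕ) (hp : 1 < p)
    (hS : Set.ncard {x : Γ | ∃ k : ℤ, x = t ^ k * a * t ^ (-k)} = p) :
    ∀ n : ℕ, p < n → ¬ IsSLFree n Γ := by
  intro n hn hfree
  obtain ⟨htp, hta⟩ := commute_pow_and_not_commute_of_ncard_conj_orbit hp hS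
  have hc : ⁅a, t⁆ ≠ 1 := fun h => hta (commutatorElement_eq_one_iff_commute.mp h).symm
  have hcΔ : ⁅a, t⁆ ∈ Δ :=
    @Subgroup.commutator_le_left _ _ Δ ⊤ hΔn _
      (Subgroup.commutator_mem_commutator ha (Subgroup.mem_top t))
  have hcomm (i j : ℕ) : Commute (t ^ i * ⁅a, t⁆ * (t ^ i)⁻¹) (t ^ j * ⁅a, t⁆ * (t ^ j)⁻¹) :=
    hab _ (hΔn.conj_mem _ hcΔ _) _ (hΔn.conj_mem _ hcΔ _)
  have : Nonempty (Fin n) := ⟨⟨0, by omega⟩⟩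
  have hvanish : ∀ B ∈ {B | ∃ φ : Γ →* SpecialLinearGroup (Fin n) ℂ, φ ⁅a, t⁆ = B},
      (kroneckerPow p (B : Matrix (Fin n) (Fin n) ℂ) - 1).det = 0 := by
    rintro _ ⟨φ, rfl⟩
    obtain ⟨ν, hν, hprod⟩ := exists_eigenvalues_prod_eq_one_of_mul_pow_eq_pow
      (SpecialLinearGroup.coeMonoidHom.comp φ) hcomm (commutatorElement_mul_pow_eq_pow htp)
    exact det_kroneckerPow_sub_one_eq_zero hν hprod
  obtain ⟨A, hA⟩ := exists_det_kroneckerPow_sub_one_ne_zero (ι := Fin n) (m := p) (by omega)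
    (by simpa using hn)
  exact hA ((hfree _ hc).det_kroneckerPow_sub_one_eq_zero hvanish A)

/-- If `Γ` has a normal, abelian, torsion-free subgroup `Δ`, `t ∈ Γ`, `a ∈ Δ`, and the
conjugacy orbit `{ tᵏ a t⁻ᵏ : k ∈ ℤ }` is finite of cardinality `p` with `1 < p`, then
`Γ` is not `SL_n(ℂ)`-free for any `n > p`. -/
theorem not_SLFree_of_finite_conjugation_orbit
    (Γ : Type*) [Group Γ] (Δ : Subgroup Γ) (hΔn : Δ.Normal)
    (hab : ∀ x ∈ Δ, ∀ y ∈ Δ, x * y = y * x)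
    (htf : ∀ x ∈ Δ, x ≠ 1 → ¬ IsOfFinOrder x)
    (t : Γ) (a : Γ) (ha : a ∈ Δ) (p : ℕ) (hp : 1 < p)
    (hS : Set.ncard {x : Γ | ∃ k : ℤ, x = t ^ k * a * t ^ (-k)} = p)
    (hSfin : {x : Γ | ∃ k : ℤ, x = t ^ k * a * t ^ (-k)}.Finite) :
    ∀ n : ℕ, p < n → ¬ IsSLFree n Γ :=
  not_SLFree_of_finite_conjugation_orbit_general Γ Δ hΔn hab t a ha p hp hS
end

section
/- For every natural number n there exists a real number C_n such that the following holds: for every finite field F with q = |F|, every natural number s < n, every natural number m, and every semisimple linear endomorphism T of F^n all of whose eigenvalues have algebraic multiplicity at most m (i.e., every root of the characteristic polynomial of T in an algebraic closure of F has multiplicity at most m), the number of s-dimensional F-subspaces W of F^n with T(W) ⊆ W is at most C_n · q^{m·s}. -/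
/-!
Since `T` is semisimple, every invariant subspace `W` is a direct sum of at most `dim W` cyclic
subspaces `F[T] v_j`. The minimal polynomial `g_j` of `T` on `F[T] v_j` is a monic divisor of the
minimal polynomial of `T`, has degree at most `dim F[T] v_j` and kills `v_j`. So `W` is determined
by a tuple `(v_j)` with `v_j ∈ ker g_j(T)`, where `(g_j)` is one of at most `2 ^ (n * n)` tuples
of monic divisors with `∑ deg g_j ≤ dim W`. The kernel of `g(T)` has an invariant complement, so
the characteristic polynomial of `T` on it divides that of `T`; its roots are roots of `g`, each
of multiplicity at most `m`, hence `dim ker g(T) ≤ m * deg g`. So every tuple `(g_j)` leaves at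
most `q ^ (m * dim W)` choices of `(v_j)`.
-/

open Polynomial Module Finset

namespace Polynomial

theorem natDegree_le_mul_natDegree_of_rootMultiplicity_le {L : Type*} [Field L] [IsAlgClosed L]
    {p g : L[X]} {m : ℕ} (hg : g ≠ 0) (hroot : ∀ x, p.IsRoot x → g.IsRoot x)
    (hm : ∀ x, p.rootMultiplicity x ≤ m) : p.natDegree ≤ m * g.natDegree := by
  classical
  have hsub : p.roots.toFinset ⊆ g.roots.toFinset := by
    intro x hx
    rw [Multiset.mem_toFinset, mem_roots'] at hx ⊢
    exact ⟨hg, hroot x hx.2⟩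
  calc p.natDegree = ∑ x ∈ p.roots.toFinset, p.roots.count x := by
        rw [Multiset.toFinset_sum_count_eq, IsAlgClosed.card_roots_eq_natDegree]
    _ ≤ #p.roots.toFinset * m := by
        simpa only [count_roots, smul_eq_mul] using sum_le_card_nsmul _ _ m fun x _ => hm x
    _ ≤ g.natDegree * m := by
        gcongr
        exact (card_le_card hsub).trans
          ((Multiset.toFinset_card_le _).trans (card_roots' g))
    _ = m * g.natDegree := mul_comm _ _

theorem exists_finset_monic_dvd {K : Type*} [Field K] {μ : K[X]} (hμ : μ ≠ 0) :
    ∃ D : Finset K[X], (∀ g, g ∈ D ↔ g.Monic ∧ g ∣ μ) ∧ #D ≤ 2 ^ μ.natDegree := by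
  classical
  let σ := algebraMap K (AlgebraicClosure K)
  let S := {g : K[X] | g.Monic ∧ g ∣ μ}
  let P := (μ.map σ).roots.powerset.toFinset
  -- a monic divisor of `μ` is determined by its roots in the algebraic closure, a submultiset of
  -- the roots of `μ`
  let rootsMap : K[X] → Multiset (AlgebraicClosure K) := fun g => (g.map σ).roots
  have hmaps : Set.MapsTo rootsMap S P := by
    rintro g ⟨-, hg⟩
    simpa [P] using roots.le_of_dvd (map_ne_zero hμ) (Polynomial.map_dvd σ hg)
  have hinj : Set.InjOn rootsMap S := by
    rintro g₁ ⟨h₁, -⟩ g₂ ⟨h₂, -⟩ h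
    apply map_injective σ σ.injective
    rw [← prod_multiset_X_sub_C_of_monic_of_roots_card_eq (h₁.map σ)
        IsAlgClosed.card_roots_eq_natDegree,
      ← prod_multiset_X_sub_C_of_monic_of_roots_card_eq (h₂.map σ)
        IsAlgClosed.card_roots_eq_natDegree]
    exact congrArg (fun r => (r.map fun a => X - C a).prod) h
  have hfin : S.Finite := Set.Finite.of_injOn hmaps hinj P.finite_toSet
  refine ⟨hfin.toFinset, fun g => by simp [S], ?_⟩
  calc #hfin.toFinset = S.ncard := (Set.ncard_eq_toFinset_card S hfin).symm
    _ ≤ #P := (Set.ncard_le_ncard_of_injOn rootsMap (fun g hg => hmaps hg) hinj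
          P.finite_toSet).trans_eq (Set.ncard_coe_finset P)
    _ ≤ 2 ^ μ.natDegree := by
        refine (Multiset.toFinset_card_le _).trans ?_
        rw [Multiset.card_powerset, IsAlgClosed.card_roots_eq_natDegree, natDegree_map]

end Polynomial

theorem Matrix.isRoot_of_isRoot_charpoly {K ι : Type*} [Field K] [Fintype ι] [DecidableEq ι]
    {A : Matrix ι ι K} {h : K[X]} (hA : aeval A h = 0) {x : K} (hx : A.charpoly.IsRoot x) :
    h.IsRoot x := by
  have hx' : Module.End.HasEigenvalue (Matrix.toLin' A) x := by
    rwa [Module.End.hasEigenvalue_iff_isRoot_charpoly, Matrix.charpoly_toLin']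
  have hroot : (minpoly K A).IsRoot x :=
    Matrix.minpoly_toLin' A ▸ Module.End.isRoot_of_hasEigenvalue hx'
  exact hroot.dvd (minpoly.dvd K A hA)

theorem iSup_fin_succ {α : Type*} [CompleteLattice α] {k : ℕ} (f : Fin (k + 1) → α) :
    ⨆ j, f j = f 0 ⊔ ⨆ i : Fin k, f i.succ :=
  le_antisymm
    (iSup_le fun j => Fin.cases le_sup_left
      (fun i => le_sup_of_le_right (le_iSup_of_le i le_rfl)) j)
    (sup_le (le_iSup f 0) (iSup_le fun i => le_iSup f i.succ))

theorem Finset.card_biUnion_piFinset_le {ι κ α : Type*} [Fintype κ] [DecidableEq κ]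
    [DecidableEq α] (D : Finset ι) (K : ι → Finset α) (w : ι → ℕ) {b s : ℕ}
    (hb : 0 < b) (hK : ∀ i ∈ D, #(K i) ≤ b ^ w i) :
    #(((Fintype.piFinset fun _ : κ => D).filter fun g => ∑ j, w (g j) ≤ s).biUnion
      fun g => Fintype.piFinset fun j => K (g j)) ≤ #D ^ Fintype.card κ * b ^ s := by
  refine card_biUnion_le.trans ((sum_le_card_nsmul _ _ (b ^ s) fun g hg => ?_).trans ?_)
  · obtain ⟨hgD, hgw⟩ := mem_filter.1 hg
    rw [Fintype.card_piFinset]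
    calc ∏ j, #(K (g j)) ≤ ∏ j, b ^ w (g j) :=
          prod_le_prod' fun j _ => hK _ (Fintype.mem_piFinset.1 hgD j)
      _ = b ^ ∑ j, w (g j) := prod_pow_eq_pow_sum _ _ _
      _ ≤ b ^ s := Nat.pow_le_pow_right hb hgw
  · rw [smul_eq_mul]
    refine Nat.mul_le_mul_right _ ((card_filter_le _ _).trans_eq ?_)
    simp [Fintype.card_piFinset]

namespace Module.End

variable {F V : Type*} [Field F] [AddCommGroup V] [Module F V] (T : End F V)

theorem aeval_restrict_apply {p : Submodule F V} (hp : p ∈ T.invtSubmodule) (g : F[X]) (x : p) :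
    (aeval (T.restrict hp) g x : V) = aeval T g (x : V) := by
  simp only [aeval_eq_sum_range, LinearMap.coe_sum, LinearMap.coe_smul, Finset.sum_apply,
    Pi.smul_apply, AddSubmonoidClass.coe_finsetSum, SetLike.val_smul]
  refine Finset.sum_congr rfl fun i _ => ?_
  rw [Module.End.pow_restrict i hp]
  rfl

theorem minpoly_restrict_dvd {p : Submodule F V} (hp : p ∈ T.invtSubmodule) :
    minpoly F (T.restrict hp) ∣ minpoly F T :=
  minpoly.dvd _ _ <| LinearMap.ext fun x => Subtype.ext <| by
    rw [aeval_restrict_apply, minpoly.aeval]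
    rfl

theorem aeval_minpoly_restrict_apply {p : Submodule F V} (hp : p ∈ T.invtSubmodule) {x : V}
    (hx : x ∈ p) : aeval T (minpoly F (T.restrict hp)) x = 0 := by
  rw [← aeval_restrict_apply T hp _ ⟨x, hx⟩, minpoly.aeval]
  rfl

theorem ker_aeval_mem_invtSubmodule (g : F[X]) : LinearMap.ker (aeval T g) ∈ T.invtSubmodule := by
  intro x hx
  have hcomm : Commute (aeval T g) T := by simpa using (commute_X g).symm.map (aeval T)
  rw [Submodule.mem_comap, LinearMap.mem_ker, ← mul_apply, hcomm.eq, mul_apply,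
    LinearMap.mem_ker.1 hx, map_zero]

def cyclicSubspace (v : V) : Submodule F V :=
  Submodule.span F (Set.range fun i : ℕ => (T ^ i) v)

theorem self_mem_cyclicSubspace (v : V) : v ∈ T.cyclicSubspace v :=
  Submodule.subset_span ⟨0, by simp⟩

theorem cyclicSubspace_mem_invtSubmodule (v : V) : T.cyclicSubspace v ∈ T.invtSubmodule := by
  rw [mem_invtSubmodule_iff_map_le, cyclicSubspace, Submodule.map_span_le]
  rintro _ ⟨i, rfl⟩
  exact Submodule.subset_span ⟨i + 1, by simp [pow_succ', mul_apply]⟩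

theorem cyclicSubspace_le {p : Submodule F V} (hp : p ∈ T.invtSubmodule) {v : V} (hv : v ∈ p) :
    T.cyclicSubspace v ≤ p :=
  Submodule.span_le.2 <| Set.range_subset_iff.2 fun i => pow_apply_mem_of_forall_mem i hp v hv

@[simp]
theorem cyclicSubspace_zero : T.cyclicSubspace 0 = ⊥ := by
  simp [cyclicSubspace]

variable [FiniteDimensional F V]

theorem natDegree_minpoly_le_finrank : (minpoly F T).natDegree ≤ finrank F V := by
  simpa [LinearMap.charpoly_natDegree] using
    natDegree_le_of_dvd (LinearMap.minpoly_dvd_charpoly T) (LinearMap.charpoly_monic T).ne_zero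

theorem charpoly_restrict_dvd_of_isCompl {p q : Submodule F V} (hp : p ∈ T.invtSubmodule)
    (hq : q ∈ T.invtSubmodule) (hpq : IsCompl p q) :
    (T.restrict hp).charpoly ∣ T.charpoly := by
  let e := Submodule.prodEquivOfIsCompl p q hpq
  have hconj : (T.restrict hp).prodMap (T.restrict hq) = e.symm.conj T := by
    refine LinearMap.ext fun z => ?_
    rw [LinearEquiv.conj_apply_apply, LinearEquiv.symm_symm, LinearEquiv.eq_symm_apply]
    simp only [LinearMap.prodMap_apply, Submodule.coe_prodEquivOfIsCompl', map_add, e]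
    rfl
  exact ⟨(T.restrict hq).charpoly, by
    rw [← e.symm.charpoly_conj T, ← hconj, LinearMap.charpoly_prodMap]⟩

theorem finrank_le_mul_natDegree_of_aeval_eq_zero {g : F[X]} (hg : g ≠ 0) (hT : aeval T g = 0)
    {m : ℕ} (hm : ∀ x : AlgebraicClosure F,
      (T.charpoly.map (algebraMap F (AlgebraicClosure F))).rootMultiplicity x ≤ m) :
    finrank F V ≤ m * g.natDegree := by
  set σ := algebraMap F (AlgebraicClosure F)
  let b := Module.finBasis F V
  let A := (LinearMap.toMatrixAlgEquiv b T).map σ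
  have hA : A.charpoly = T.charpoly.map σ := by
    rw [Matrix.charpoly_map]
    exact congrArg _ (LinearMap.charpoly_toMatrix T b)
  have hAg : aeval A (g.map σ) = 0 := by
    rw [aeval_map_algebraMap, show A = (Algebra.ofId F _).mapMatrix (LinearMap.toMatrixAlgEquiv b T)
      from rfl, aeval_algHom_apply, ← AlgEquiv.coe_toAlgHom, aeval_algHom_apply]
    simp [hT]
  calc finrank F V = A.charpoly.natDegree := by
        rw [hA, (LinearMap.charpoly_monic T).natDegree_map, LinearMap.charpoly_natDegree]
    _ ≤ m * (g.map σ).natDegree :=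
        natDegree_le_mul_natDegree_of_rootMultiplicity_le (map_ne_zero hg)
          (fun x hx => Matrix.isRoot_of_isRoot_charpoly hAg hx) (hA ▸ hm)
    _ = m * g.natDegree := by rw [natDegree_map]

theorem IsSemisimple.finrank_ker_aeval_le {T : End F V} (hT : T.IsSemisimple) {g : F[X]}
    (hg : g ≠ 0) {m : ℕ} (hm : ∀ x : AlgebraicClosure F,
      (T.charpoly.map (algebraMap F (AlgebraicClosure F))).rootMultiplicity x ≤ m) :
    finrank F (LinearMap.ker (aeval T g)) ≤ m * g.natDegree := by
  have hp := T.ker_aeval_mem_invtSubmodule g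
  obtain ⟨q, hq, hpq⟩ := isSemisimple_iff.1 hT _ hp
  refine finrank_le_mul_natDegree_of_aeval_eq_zero (T.restrict hp) hg ?_ fun x => ?_
  · ext x
    simp [aeval_restrict_apply]
  · exact (rootMultiplicity_le_rootMultiplicity_of_dvd ((LinearMap.charpoly_monic T).map _).ne_zero
      (Polynomial.map_dvd _ (charpoly_restrict_dvd_of_isCompl T hp hq hpq)) x).trans (hm x)

theorem IsSemisimple.exists_eq_iSup_cyclicSubspace {T : End F V} (hT : T.IsSemisimple) :
    ∀ (k : ℕ) {W : Submodule F V}, W ∈ T.invtSubmodule → finrank F W ≤ k →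
      ∃ v : Fin k → V, W = ⨆ j, T.cyclicSubspace (v j) ∧
        ∑ j, finrank F (T.cyclicSubspace (v j)) = finrank F W
  | 0, W, _, hW =>
    ⟨Fin.elim0, by rw [iSup_of_empty, ← Submodule.finrank_eq_zero]; omega, by simp; omega⟩
  | k + 1, W, hWinv, hW => by
    by_cases hW0 : W = ⊥
    · subst hW0
      exact ⟨0, by simp, by simp⟩
    obtain ⟨v₀, hv₀W, hv₀⟩ := Submodule.exists_mem_ne_zero_of_ne_bot hW0
    obtain ⟨r, -, hr, hdisj, hsup⟩ := (isSemisimple_restrict_iff W hWinv).1 (hT.restrict hWinv)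
      _ (T.cyclicSubspace_mem_invtSubmodule v₀) (T.cyclicSubspace_le hWinv hv₀W)
    have hrank : finrank F (T.cyclicSubspace v₀) + finrank F r = finrank F W := by
      rw [← hsup, ← Submodule.finrank_sup_add_finrank_inf_eq, hdisj.eq_bot, finrank_bot,
        add_zero]
    have hC : finrank F (T.cyclicSubspace v₀) ≠ 0 := fun h => hv₀ <| by
      simpa [Submodule.finrank_eq_zero.1 h] using T.self_mem_cyclicSubspace v₀
    obtain ⟨v, hvr, hsum⟩ := hT.exists_eq_iSup_cyclicSubspace k hr (by omega)
    refine ⟨(Fin.cons v₀ v : Fin (k + 1) → V), ?_, ?_⟩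
    · rw [iSup_fin_succ]
      simp [← hvr, hsup]
    · rw [Fin.sum_univ_succ, Fin.cons_zero, ← hrank, ← hsum]
      exact congrArg _ (sum_congr rfl fun i _ => by rw [Fin.cons_succ])

theorem IsSemisimple.exists_cyclic_generators {T : End F V} (hT : T.IsSemisimple)
    {W : Submodule F V} (hW : W ∈ T.invtSubmodule) {k : ℕ} (hk : finrank F W ≤ k) :
    ∃ (v : Fin k → V) (g : Fin k → F[X]), W = ⨆ j, T.cyclicSubspace (v j) ∧
      (∀ j, (g j).Monic ∧ g j ∣ minpoly F T ∧ aeval T (g j) (v j) = 0) ∧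
      ∑ j, (g j).natDegree ≤ finrank F W := by
  obtain ⟨v, hWv, hsum⟩ := hT.exists_eq_iSup_cyclicSubspace k hW hk
  refine ⟨v, fun j => minpoly F (T.restrict (T.mem_invtSubmodule_iff_forall_mem_of_mem.mp
    (T.cyclicSubspace_mem_invtSubmodule (v j)))), hWv,
    fun j => ⟨minpoly.monic (LinearMap.isIntegral _), T.minpoly_restrict_dvd _,
      T.aeval_minpoly_restrict_apply _ (T.self_mem_cyclicSubspace _)⟩, ?_⟩
  rw [← hsum]
  exact sum_le_sum fun j _ => natDegree_minpoly_le_finrank _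

theorem IsSemisimple.natCard_ker_aeval_le [Finite F] {T : End F V} (hT : T.IsSemisimple)
    {g : F[X]} (hg : g ≠ 0) {m : ℕ} (hm : ∀ x : AlgebraicClosure F,
      (T.charpoly.map (algebraMap F (AlgebraicClosure F))).rootMultiplicity x ≤ m) :
    Nat.card (LinearMap.ker (aeval T g)) ≤ Nat.card F ^ (m * g.natDegree) := by
  rw [Module.natCard_eq_pow_finrank (K := F)]
  exact Nat.pow_le_pow_right Nat.card_pos (hT.finrank_ker_aeval_le hg hm)

theorem IsSemisimple.ncard_invtSubmodule_le [Finite F] {T : End F V} (hT : T.IsSemisimple)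
    {m : ℕ} (hm : ∀ x : AlgebraicClosure F,
      (T.charpoly.map (algebraMap F (AlgebraicClosure F))).rootMultiplicity x ≤ m) (s : ℕ) :
    {W : Submodule F V | finrank F W = s ∧ W ∈ T.invtSubmodule}.ncard ≤
      2 ^ (finrank F V * finrank F V) * Nat.card F ^ (m * s) := by
  classical
  have : Finite V := Module.finite_of_finite F
  have : Fintype V := Fintype.ofFinite V
  set d := finrank F V
  obtain ⟨D, hD, hDcard⟩ := exists_finset_monic_dvd (minpoly.ne_zero (LinearMap.isIntegral T))
  let K : F[X] → Finset V := fun g => {v | v ∈ LinearMap.ker (aeval T g)}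
  let w : F[X] → ℕ := fun g => m * g.natDegree
  let U := ((Fintype.piFinset fun _ : Fin d => D).filter fun g => ∑ j, w (g j) ≤ m * s).biUnion
    fun g => Fintype.piFinset fun j => K (g j)
  have hsub : {W : Submodule F V | finrank F W = s ∧ W ∈ T.invtSubmodule} ⊆
      U.image fun v => ⨆ j, T.cyclicSubspace (v j) := by
    rintro W ⟨rfl, hW⟩
    obtain ⟨v, g, hWv, hg, hsum⟩ := hT.exists_cyclic_generators hW (Submodule.finrank_le W)
    have hgD : g ∈ Fintype.piFinset fun _ => D :=
      Fintype.mem_piFinset.2 fun j => (hD _).2 ⟨(hg j).1, (hg j).2.1⟩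
    have hgw : ∑ j, w (g j) ≤ m * finrank F W := by
      rw [← mul_sum]
      exact Nat.mul_le_mul_left m hsum
    have hvK : v ∈ Fintype.piFinset fun j => K (g j) :=
      Fintype.mem_piFinset.2 fun j => by simpa [K] using (hg j).2.2
    exact mem_image.2 ⟨v, mem_biUnion.2 ⟨g, mem_filter.2 ⟨hgD, hgw⟩, hvK⟩, hWv.symm⟩
  have hK : ∀ g ∈ D, #(K g) ≤ Nat.card F ^ w g := fun g hg =>
    ((Fintype.card_subtype _).symm.trans Fintype.card_eq_nat_card).trans_le
      (hT.natCard_ker_aeval_le ((hD g).1 hg).1.ne_zero hm)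
  have hDd : #D ≤ 2 ^ d :=
    hDcard.trans (Nat.pow_le_pow_right two_pos (natDegree_minpoly_le_finrank T))
  calc _ ≤ #(U.image fun v => ⨆ j, T.cyclicSubspace (v j)) :=
        (Set.ncard_le_ncard hsub (finite_toSet _)).trans_eq (Set.ncard_coe_finset _)
    _ ≤ #U := card_image_le
    _ ≤ #D ^ d * Nat.card F ^ (m * s) := by
        simpa using card_biUnion_piFinset_le (κ := Fin d) (s := m * s) D K w Nat.card_pos hK
    _ ≤ 2 ^ (d * d) * Nat.card F ^ (m * s) := by
        exact Nat.mul_le_mul_right _ ((Nat.pow_le_pow_left hDd d).trans_eq (pow_mul 2 d d).symm)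

end Module.End

/-- For every `n` there is a constant `C_n` such that for any finite field `F` with
`q = |F|`, any `s < n`, and any semisimple endomorphism `T` of `F^n` all of whose
eigenvalues (in an algebraic closure) have algebraic multiplicity at most `m`, the
number of `s`-dimensional `T`-invariant subspaces of `F^n` is at most `C_n · q^{ms}`. -/
theorem count_invariant_subspaces_le (n : ℕ) :
    ∃ C : ℝ, ∀ (F : Type) [Field F] [Fintype F], ∀ (s m : ℕ), s < n →
      ∀ T : (Fin n → F) →ₗ[F] (Fin n → F),
        (∀ p : Submodule F (Fin n → F), (∀ v ∈ p, T v ∈ p) →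
          ∃ q : Submodule F (Fin n → F), (∀ v ∈ q, T v ∈ q) ∧ IsCompl p q) →
        (∀ lam : AlgebraicClosure F,
          Polynomial.rootMultiplicity lam
            ((LinearMap.charpoly T).map (algebraMap F (AlgebraicClosure F))) ≤ m) →
        (Set.ncard {W : Submodule F (Fin n → F) |
            Module.finrank F W = s ∧ ∀ v ∈ W, T v ∈ W} : ℝ) ≤
          C * (Fintype.card F : ℝ) ^ (m * s) := by
  refine ⟨2 ^ (n * n), fun F _ _ s m _ T hcompl hm => ?_⟩
  have hcount := (Module.End.isSemisimple_iff.2 hcompl).ncard_invtSubmodule_le hm s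
  rw [Module.finrank_fin_fun, ← Fintype.card_eq_nat_card] at hcount
  exact_mod_cast hcount
end
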